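/- arXiv:2204.07273 — 3 statements merged into one kernel-verified Lean document; each statement's English description precedes it below -/
import Mathlib

section
/- Let p be a prime, let χ be a nontrivial Dirichlet character modulo p, and let x, y be integers with p ∤ x·y. Then Σ_{a (mod p), p ∤ a} conj(χ)(a) · S(x·ā, y; p) = conj(χ)(x·y) · τ(χ)², where ā denotes the multiplicative inverse of a modulo p. -/
open Finset

/-- `eR x = exp(2πi·x)`. -/
noncomputable def eR (x : ℝ) : ℂ := Complex.exp (2 * Real.pi * Complex.I * x)

/-- `eZMod c x = e(x/c)` for a residue `x` mod `c`. -/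
noncomputable def eZMod (c : ℕ) (x : ZMod c) : ℂ := eR ((x.val : ℝ) / c)

/-- Kloosterman sum `S(a, b; c)`. -/
noncomputable def kloos (a b : ℤ) (c : ℕ) : ℂ :=
  ∑ d ∈ (Finset.range c).filter (fun d => Nat.Coprime d c),
    eZMod c ((a : ZMod c) * (d : ZMod c) + (b : ZMod c) * ((d : ZMod c))⁻¹)

/-- Normalized Kloosterman sum `Kl2(n; p)`. -/
noncomputable def Kl2 (p : ℕ) (n : ZMod p) : ℂ :=
  ((1 / Real.sqrt p : ℝ) : ℂ) *
    ∑ x1 ∈ Finset.range p, ∑ x2 ∈ Finset.range p,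
      if (x1 : ZMod p) * (x2 : ZMod p) = n then eR (((x1 : ℝ) + (x2 : ℝ)) / p) else 0

/-- Gauss sum `τ(χ)` of a Dirichlet character mod `q`. -/
noncomputable def gauss (q : ℕ) (χ : DirichletCharacter ℂ q) : ℂ :=
  ∑ a ∈ Finset.range q, χ (a : ZMod q) * eZMod q (a : ZMod q)

/-- The sum `L_{α,β}(v; p)` attached to a Dirichlet character mod `p`. -/
noncomputable def Lab (p : ℕ) (χ : DirichletCharacter ℂ p) (α β v : ZMod p) : ℂ :=
  ((1 / Real.sqrt p : ℝ) : ℂ) *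
    ∑ b ∈ Finset.range p,
      if Nat.Coprime (((b : ZMod p) + β * v).val) p
      then (starRingEnd ℂ) (χ (b : ZMod p)) * eZMod p (α * ((b : ZMod p) + β * v)⁻¹)
      else 0

/-- The character sum `𝔅(n1, n2, m; q)` (with parameters `r, M1, M2`). -/
noncomputable def frakB (r M1 M2 n1 : ℕ) (n2 m : ℤ) (q : ℕ) : ℂ :=
  ∑ d ∈ q.divisors, (d : ℂ) * ((ArithmeticFunction.moebius (q / d) : ℤ) : ℂ) *
    ∑ u ∈ (Finset.range (q * r / n1)).filter (fun u => Nat.Coprime u (q * r / n1)),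
      if (m : ZMod d) = ((M2 ^ 2 * n1 * u : ℕ) : ZMod d)
      then eZMod (q * r / n1)
        ((n2 : ZMod (q * r / n1)) * ((M1 : ZMod (q * r / n1)) * (u : ZMod (q * r / n1)))⁻¹)
      else 0

/-- The character sum `𝔇(n1, n2, m, q; M1)` (with parameters `r, M2, χ1`). -/
noncomputable def frakD (M1 M2 q r n1 : ℕ) (χ1 : DirichletCharacter ℂ M1) (n2 m : ℤ) : ℂ :=
  ∑ a ∈ (Finset.range M1).filter (fun a => Nat.Coprime a M1),
    Lab M1 χ1 ((m : ZMod M1) * ((q : ZMod M1) * (M2 : ZMod M1))⁻¹) (M2 : ZMod M1) (a : ZMod M1) *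
    Kl2 M1 (-(r : ZMod M1) * (n2 : ZMod M1) *
      ((a : ZMod M1) * (((q * r / n1 : ℕ)) : ZMod M1) ^ 2)⁻¹)

/-!
Since `χ̄ = χ⁻¹` for `ℂ`-valued characters, the reindexing `a ↦ a⁻¹` turns the left side into
`∑_a χ(a) S(x a, y; p) = ∑_{a,d} χ(a) ψ(x a d) ψ(y d⁻¹)` with `ψ = e(·/p)`. For fixed `d` the sum
over `a` is the Gauss sum of `χ` against `ψ` shifted by the unit `x d`, so it equals
`χ⁻¹(x d) τ(χ)`; the remaining sum `∑_d χ(d⁻¹) ψ(y d⁻¹)` is again a shifted Gauss sum, equal to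
`χ⁻¹(y) τ(χ)`.
-/

open ZMod (stdAddChar)

theorem MulChar.inv_apply_coe {R R' : Type*} [CommMonoidWithZero R] [CommMonoidWithZero R']
    (χ : MulChar R R') (u : Rˣ) : χ⁻¹ ↑u = χ ↑u⁻¹ := by
  rw [MulChar.inv_apply, Ring.inverse_unit]

section Kloosterman

variable {R R' : Type*} [CommRing R] [Fintype R] [DecidableEq R] [CommRing R']

def kloostermanSum (ψ : AddChar R R') (a b : R) : R' :=
  ∑ d : Rˣ, ψ (a * d + b * ↑d⁻¹)

theorem gaussSum_eq_sum_units (χ : MulChar R R') (ψ : AddChar R R') :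
    gaussSum χ ψ = ∑ u : Rˣ, χ u * ψ u := by
  rw [gaussSum, ← Finset.sum_subset
    (Finset.subset_univ (Finset.univ.map ⟨Units.val, Units.val_injective⟩)), Finset.sum_map]
  · rfl
  · intro a _ ha
    rw [MulChar.map_nonunit χ (fun hu => ha (by simpa using ⟨hu.unit, rfl⟩)), zero_mul]

theorem sum_units_mulChar_mul_addChar_mul (χ : MulChar R R') (ψ : AddChar R R') (c : Rˣ) :
    ∑ u : Rˣ, χ u * ψ (c * u) = χ⁻¹ c * gaussSum χ ψ := by
  rw [← gaussSum_mulShift_eq, gaussSum_eq_sum_units]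
  rfl

theorem sum_mulChar_mul_kloostermanSum (χ : MulChar R R') (ψ : AddChar R R') (x y : Rˣ) :
    ∑ a : Rˣ, χ a * kloostermanSum ψ (x * a) y = χ⁻¹ ↑(x * y) * gaussSum χ ψ ^ 2 := by
  have hinner (d : Rˣ) : ∑ a : Rˣ, χ a * ψ (x * a * d) = χ⁻¹ x * χ ↑d⁻¹ * gaussSum χ ψ := by
    have hxad (a : Rˣ) : (x * a * d : R) = ↑(x * d) * a := by push_cast; ring
    simp_rw [hxad, sum_units_mulChar_mul_addChar_mul, Units.val_mul, map_mul,
      MulChar.inv_apply_coe]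
  calc ∑ a : Rˣ, χ a * kloostermanSum ψ (x * a) y
      = ∑ d : Rˣ, ψ (y * ↑d⁻¹) * ∑ a : Rˣ, χ a * ψ (x * a * d) := by
        simp_rw [kloostermanSum, Finset.mul_sum, AddChar.map_add_eq_mul]
        rw [Finset.sum_comm]
        refine Finset.sum_congr rfl fun d _ => Finset.sum_congr rfl fun a _ => ?_
        ring
    _ = χ⁻¹ x * gaussSum χ ψ * ∑ d : Rˣ, χ d * ψ (y * d) := by
        simp_rw [hinner, Finset.mul_sum]
        rw [← Equiv.sum_comp (Equiv.inv Rˣ)]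
        refine Finset.sum_congr rfl fun d _ => ?_
        simp only [Equiv.inv_apply, inv_inv]
        ring
    _ = χ⁻¹ ↑(x * y) * gaussSum χ ψ ^ 2 := by
        rw [sum_units_mulChar_mul_addChar_mul, Units.val_mul, map_mul]
        ring

end Kloosterman

theorem sum_range_natCast_eq_sum_zmod {M : Type*} [AddCommMonoid M] (n : ℕ) [NeZero n]
    (f : ZMod n → M) : ∑ a ∈ range n, f a = ∑ z : ZMod n, f z :=
  Finset.sum_nbij' (↑) ZMod.val (by simp) (by simp [ZMod.val_lt])
    (fun _ ha => ZMod.val_cast_of_lt (mem_range.1 ha)) (fun z _ => ZMod.natCast_zmod_val z)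
    (fun _ _ => rfl)

theorem sum_coprime_natCast_eq_sum_units {M : Type*} [AddCommMonoid M] (n : ℕ) [NeZero n]
    (f : ZMod n → M) :
    ∑ a ∈ (range n).filter (fun a => a.Coprime n), f a = ∑ u : (ZMod n)ˣ, f u :=
  Finset.sum_bij' (fun a ha => ZMod.unitOfCoprime a (mem_filter.1 ha).2)
    (fun u _ => (u : ZMod n).val) (fun _ _ => mem_univ _)
    (fun u _ => mem_filter.2 ⟨mem_range.2 (ZMod.val_lt _), ZMod.val_coe_unit_coprime u⟩)
    (fun a ha => by
      simpa using ZMod.val_cast_of_lt (mem_range.1 (mem_filter.1 ha).1))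
    (fun u _ => Units.ext (by simp))
    (fun _ _ => rfl)

theorem eZMod_eq_stdAddChar (c : ℕ) [NeZero c] (z : ZMod c) : eZMod c z = stdAddChar z := by
  rw [ZMod.stdAddChar_apply, ZMod.toCircle_apply, eZMod, eR]
  push_cast
  ring_nf

theorem kloos_eq_kloostermanSum (a b : ℤ) (c : ℕ) [NeZero c] :
    kloos a b c = kloostermanSum stdAddChar (a : ZMod c) b := by
  rw [kloos, sum_coprime_natCast_eq_sum_units c (fun d => eZMod c (a * d + b * d⁻¹))]
  simp_rw [eZMod_eq_stdAddChar, ZMod.inv_coe_unit]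
  rfl

theorem gauss_eq_gaussSum (q : ℕ) [NeZero q] (χ : DirichletCharacter ℂ q) :
    gauss q χ = gaussSum χ stdAddChar := by
  simp_rw [gauss, eZMod_eq_stdAddChar]
  exact sum_range_natCast_eq_sum_zmod q (fun z => χ z * stdAddChar z)

theorem kloosterman_twisted_average_general
    (p : ℕ) (hp : p.Prime) (χ : DirichletCharacter ℂ p)
    (x y : ℤ) (hxy : ¬ ((p : ℤ) ∣ x * y)) :
    ∑ a ∈ (Finset.range p).filter (fun a => Nat.Coprime a p),
      (starRingEnd ℂ) (χ (a : ZMod p)) *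
        kloos (x * (ZMod.val ((a : ZMod p))⁻¹ : ℤ)) y p
    = (starRingEnd ℂ) (χ ((x * y : ℤ) : ZMod p)) * gauss p χ ^ 2 := by
  have : Fact p.Prime := ⟨hp⟩
  have hunit : IsUnit ((x : ZMod p) * y) := by
    rw [isUnit_iff_ne_zero, ← Int.cast_mul, Ne, ZMod.intCast_zmod_eq_zero_iff_dvd]
    exact hxy
  obtain ⟨⟨X, hX⟩, ⟨Y, hY⟩⟩ := IsUnit.mul_iff.mp hunit
  calc _ = ∑ a : (ZMod p)ˣ, χ ↑a⁻¹ * kloostermanSum stdAddChar (X * a⁻¹ : ZMod p) Y := by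
        rw [sum_coprime_natCast_eq_sum_units p (fun a => (starRingEnd ℂ) (χ a) *
          kloos (x * (ZMod.val a⁻¹ : ℤ)) y p)]
        refine Finset.sum_congr rfl fun a _ => ?_
        rw [kloos_eq_kloostermanSum, ← RCLike.star_def, MulChar.star_apply',
          MulChar.inv_apply_coe, hX, hY]
        push_cast
        rw [ZMod.natCast_zmod_val, ZMod.inv_coe_unit]
    _ = ∑ a : (ZMod p)ˣ, χ a * kloostermanSum stdAddChar (X * a : ZMod p) Y :=
        Fintype.sum_equiv (Equiv.inv _) _ _ fun _ => rfl
    _ = _ := by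
        rw [sum_mulChar_mul_kloostermanSum, gauss_eq_gaussSum, ← RCLike.star_def,
          MulChar.star_apply', Int.cast_mul, Units.val_mul, hX, hY]

/-- twisted average of Kloosterman sums equals `conj(χ)(x·y)·τ(χ)²`. -/
theorem kloosterman_twisted_average
    (p : ℕ) (hp : p.Prime) (χ : DirichletCharacter ℂ p) (hχ : χ ≠ 1)
    (x y : ℤ) (hxy : ¬ ((p : ℤ) ∣ x * y)) :
    ∑ a ∈ (Finset.range p).filter (fun a => Nat.Coprime a p),
      (starRingEnd ℂ) (χ (a : ZMod p)) *
        kloos (x * (ZMod.val ((a : ZMod p))⁻¹ : ℤ)) y p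
    = (starRingEnd ℂ) (χ ((x * y : ℤ) : ZMod p)) * gauss p χ ^ 2 :=
  kloosterman_twisted_average_general p hp χ x y hxy
end

section
/- There is an absolute constant C > 0 with the following property. Let M1 and M2 be distinct primes and let q1, q2, r be positive integers with gcd(q2, q1·M1·M2) = 1, gcd(q1·r, M1·M2) = 1, and gcd(q2, n1·r) = 1, where n1 is a positive integer dividing q1·r. Let m, m' be integers and let ε, δ ∈ {+1, −1}. Define 𝒞2(0) = (n1/(q2²·q1·r)) · Σ_{v (mod q2²·q1·r/n1)} 𝔅(n1, ε·v, δ·m; q1·q2) · conj(𝔅(n1, ε·v, δ·m'; q1·q2)). Then |𝒞2(0)| ≤ C · q1·q2·r · Σ_{d | q1·q2} Σ_{d' | q1·q2, gcd(d, d') | (m − m')} gcd(d, d'). -/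
open Finset

/-! Write `N = q r / n1` and expand `𝔅(n1, n2, m; q) = Σ_u w_m(u) e(n2 · inv(M1 u) / N)` over the
units `u` mod `N`, with weights `w_m(u) = Σ_{d | q, m ≡ M2² n1 u (d)} d μ(q/d)`. Since
`u ↦ inv(M1 u)` is injective on units and `v` runs over `q2` full periods mod `N`, orthogonality of
additive characters turns `𝒞2(0)` into exactly `Σ_u w_m(u) conj(w_{m'}(u))`.

Bounding `|μ| ≤ 1`, the pair `(d, d')` contributes at most `d d'` times the number of `u < N`
with `M2² n1 u ≡ m (d)` and `M2² n1 u ≡ m' (d')`. Such `u` exist only when `gcd(d, d') ∣ m - m'`,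
and, `M2` being invertible, they are pairwise congruent modulo `lcm(d, d') / gcd(lcm(d, d'), n1)`;
hence there are at most `n1 N / lcm(d, d') + 1` of them, and `d d' = gcd(d, d') lcm(d, d')` gives
the contribution `≤ 2 q r gcd(d, d')`. -/

lemma eZMod_eq_stdAddChar_s7 {N : ℕ} [NeZero N] (x : ZMod N) : eZMod N x = ZMod.stdAddChar x := by
  rw [ZMod.stdAddChar_apply, ZMod.toCircle_apply, eZMod, eR]
  push_cast
  ring_nf

lemma sum_range_mul_eq_nsmul_sum {M : Type*} [AddCommMonoid M] {N : ℕ} [NeZero N] (k : ℕ)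
    (f : ZMod N → M) : ∑ v ∈ range (k * N), f v = k • ∑ x, f x := by
  have hrange : ∑ v ∈ range N, f v = ∑ x, f x :=
    sum_nbij' (fun v => (v : ZMod N)) ZMod.val (by simp) (fun x _ => by simpa using x.val_lt)
      (fun v hv => ZMod.val_cast_of_lt (mem_range.mp hv)) (fun x _ => ZMod.natCast_zmod_val x)
      (fun _ _ => rfl)
  induction k with
  | zero => simp
  | succ k ih => simp [add_mul, sum_range_add, ih, hrange, succ_nsmul]

lemma sum_range_mul_eZMod_mul {N : ℕ} [NeZero N] (k : ℕ) (w : ZMod N) :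
    ∑ v ∈ range (k * N), eZMod N (v * w) = if w = 0 then (k * N : ℂ) else 0 := by
  simp_rw [eZMod_eq_stdAddChar_s7]
  rw [sum_range_mul_eq_nsmul_sum k (fun x => ZMod.stdAddChar (x * w)),
    AddChar.sum_mulShift w (ZMod.isPrimitive_stdAddChar N)]
  split_ifs <;> simp

lemma ZMod.inv_injOn_isUnit {N : ℕ} : Set.InjOn (fun x : ZMod N => x⁻¹) {x | IsUnit x} := by
  rintro _ ⟨X, rfl⟩ _ ⟨Y, rfl⟩ h
  simp only [ZMod.inv_coe_unit] at h
  exact congrArg _ (inv_inj.mp (Units.ext h))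

lemma sum_range_mul_sum_eZMod_mul_conj {ι : Type*} [DecidableEq ι] {N : ℕ} [NeZero N] (k : ℕ)
    {ε : ℤ} (hε : IsUnit (ε : ZMod N)) {U : Finset ι} {a : ι → ZMod N} (ha : Set.InjOn a U)
    (α β : ι → ℂ) :
    ∑ v ∈ range (k * N),
      (∑ u ∈ U, α u * eZMod N (((ε * v : ℤ) : ZMod N) * a u)) *
        starRingEnd ℂ (∑ u ∈ U, β u * eZMod N (((ε * v : ℤ) : ZMod N) * a u))
      = (k * N : ℂ) * ∑ u ∈ U, α u * starRingEnd ℂ (β u) := by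
  have hterm : ∀ (v : ℕ) (u u' : ι),
      eZMod N (((ε * v : ℤ) : ZMod N) * a u) * starRingEnd ℂ (eZMod N (((ε * v : ℤ) : ZMod N) * a u'))
        = eZMod N (v * (ε * (a u - a u'))) := by
    intro v u u'
    simp only [eZMod_eq_stdAddChar_s7, ← AddChar.map_neg_eq_conj, ← AddChar.map_add_eq_mul]
    congr 1
    push_cast
    ring
  have hfreq : ∀ u ∈ U, ∀ u' ∈ U, (ε : ZMod N) * (a u - a u') = 0 ↔ u = u' := by
    intro u hu u' hu'
    rw [hε.mul_right_eq_zero, sub_eq_zero]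
    exact ha.eq_iff hu hu'
  calc _ = ∑ u ∈ U, ∑ u' ∈ U, α u * starRingEnd ℂ (β u') *
        ∑ v ∈ range (k * N), eZMod N (v * (ε * (a u - a u'))) := by
        simp_rw [map_sum, map_mul, sum_mul_sum, mul_sum]
        rw [sum_comm]
        refine sum_congr rfl fun u _ => ?_
        rw [sum_comm]
        refine sum_congr rfl fun u' _ => sum_congr rfl fun v _ => ?_
        rw [← hterm]
        ring
    _ = ∑ u ∈ U, ∑ u' ∈ U, if u = u' then (k * N : ℂ) * (α u * starRingEnd ℂ (β u')) else 0 := by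
        refine sum_congr rfl fun u hu => sum_congr rfl fun u' hu' => ?_
        rw [sum_range_mul_eZMod_mul, if_congr (hfreq u hu u' hu') rfl rfl]
        split_ifs <;> ring
    _ = _ := by simp [mul_sum]

noncomputable def frakBWeight (M2 n1 : ℕ) (m : ℤ) (q u : ℕ) : ℂ :=
  ∑ d ∈ q.divisors, (d : ℂ) * ((ArithmeticFunction.moebius (q / d) : ℤ) : ℂ) *
    if (m : ZMod d) = ((M2 ^ 2 * n1 * u : ℕ) : ZMod d) then 1 else 0

lemma frakB_eq_sum_frakBWeight (r M1 M2 n1 : ℕ) (n2 m : ℤ) (q : ℕ) :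
    frakB r M1 M2 n1 n2 m q =
      ∑ u ∈ {u ∈ range (q * r / n1) | Nat.Coprime u (q * r / n1)},
        frakBWeight M2 n1 m q u * eZMod (q * r / n1)
          ((n2 : ZMod (q * r / n1)) * ((M1 : ZMod (q * r / n1)) * (u : ZMod (q * r / n1)))⁻¹) := by
  simp only [frakB, frakBWeight, mul_sum, sum_mul, mul_ite, mul_one, mul_zero, ite_mul, zero_mul]
  exact sum_comm

lemma card_le_div_add_one_of_modEq {N L : ℕ} (hL : 0 < L) {s : Finset ℕ} (hs : s ⊆ range N)
    (hmod : ∀ u ∈ s, ∀ u' ∈ s, u ≡ u' [MOD L]) : #s ≤ N / L + 1 := by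
  obtain rfl | ⟨u₀, hu₀⟩ := s.eq_empty_or_nonempty
  · simp
  calc #s ≤ #{u ∈ range N | u ≡ u₀ [MOD L]} :=
        card_le_card fun u hu => mem_filter.mpr ⟨hs hu, hmod u hu u₀ hu₀⟩
    _ = N.count (· ≡ u₀ [MOD L]) := (Nat.count_eq_card_filter_range _ _).symm
    _ ≤ N / L + 1 := by rw [Nat.count_modEq_card _ hL]; split_ifs <;> omega

lemma gcd_dvd_sub_of_intCast_eq {d d' : ℕ} {m m' x : ℤ} (h : (m : ZMod d) = x)
    (h' : (m' : ZMod d') = x) : (Nat.gcd d d' : ℤ) ∣ m - m' := by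
  rw [ZMod.intCast_eq_intCast_iff_dvd_sub] at h h'
  have := dvd_sub ((Int.natCast_dvd_natCast.mpr (Nat.gcd_dvd_right d d')).trans h')
    ((Int.natCast_dvd_natCast.mpr (Nat.gcd_dvd_left d d')).trans h)
  rwa [sub_sub_sub_cancel_left] at this

lemma mul_mul_card_le_of_forall_cast_eq {M2 n1 N d d' : ℕ} {m m' : ℤ} (hn1 : 0 < n1) (hd : 0 < d) (hd' : 0 < d')
    (hM2 : Nat.Coprime M2 (d * d')) {s : Finset ℕ} (hs : s ⊆ range N)
    (hsol : ∀ u ∈ s, (m : ZMod d) = ((M2 ^ 2 * n1 * u : ℕ) : ZMod d) ∧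
      (m' : ZMod d') = ((M2 ^ 2 * n1 * u : ℕ) : ZMod d')) :
    d * d' * #s ≤ Nat.gcd d d' * (n1 * N + Nat.lcm d d') := by
  set ℓ := Nat.lcm d d'
  set g := Nat.gcd ℓ (M2 ^ 2 * n1)
  have hℓ : 0 < ℓ := Nat.lcm_pos hd hd'
  have hg : g ∣ n1 := by
    have hcop : Nat.Coprime (M2 ^ 2) ℓ := (hM2.coprime_dvd_right (Nat.lcm_dvd_mul d d')).pow_left 2
    rw [show g = Nat.gcd ℓ n1 from hcop.gcd_mul_left_cancel_right n1]
    exact Nat.gcd_dvd_right _ _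
  have hmod : ∀ u ∈ s, ∀ u' ∈ s, u ≡ u' [MOD ℓ / g] := by
    intro u hu u' hu'
    have h1 := (ZMod.natCast_eq_natCast_iff _ _ _).mp ((hsol u hu).1.symm.trans (hsol u' hu').1)
    have h2 := (ZMod.natCast_eq_natCast_iff _ _ _).mp ((hsol u hu).2.symm.trans (hsol u' hu').2)
    exact (Nat.mod_lcm h1 h2).cancel_left_div_gcd hℓ
  have hcard := card_le_div_add_one_of_modEq
    (Nat.div_pos (Nat.le_of_dvd hℓ (Nat.gcd_dvd_left _ _)) (Nat.gcd_pos_of_pos_left _ hℓ)) hs hmod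
  have hbulk : ℓ * (N / (ℓ / g)) ≤ n1 * N :=
    calc ℓ * (N / (ℓ / g)) = g * ((ℓ / g) * (N / (ℓ / g))) := by
          rw [← mul_assoc, Nat.mul_div_cancel' (Nat.gcd_dvd_left _ _)]
      _ ≤ n1 * N := Nat.mul_le_mul (Nat.le_of_dvd hn1 hg) (Nat.mul_div_le N _)
  calc d * d' * #s = Nat.gcd d d' * (ℓ * #s) := by rw [← mul_assoc, Nat.gcd_mul_lcm d d']
    _ ≤ Nat.gcd d d' * (ℓ * (N / (ℓ / g) + 1)) :=
        Nat.mul_le_mul_left _ (Nat.mul_le_mul_left _ hcard)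
    _ ≤ Nat.gcd d d' * (n1 * N + ℓ) := by rw [mul_add_one]; gcongr

lemma mul_mul_card_solutions_le {M2 n1 q r d d' : ℕ} {m m' : ℤ} (hn1 : 0 < n1) (hq : 0 < q)
    (hr : 0 < r) (hM2 : Nat.Coprime M2 q) (hd : d ∣ q) (hd' : d' ∣ q) {U : Finset ℕ}
    (hU : U ⊆ range (q * r / n1)) :
    ((d * d' * #{u ∈ U | (m : ZMod d) = ((M2 ^ 2 * n1 * u : ℕ) : ZMod d) ∧
        (m' : ZMod d') = ((M2 ^ 2 * n1 * u : ℕ) : ZMod d')} : ℕ) : ℝ) ≤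
      if (Nat.gcd d d' : ℤ) ∣ m - m' then 2 * ((q : ℝ) * r) * Nat.gcd d d' else 0 := by
  set s := {u ∈ U | (m : ZMod d) = ((M2 ^ 2 * n1 * u : ℕ) : ZMod d) ∧
    (m' : ZMod d') = ((M2 ^ 2 * n1 * u : ℕ) : ZMod d')}
  obtain hs | ⟨u, hu⟩ := s.eq_empty_or_nonempty
  · rw [hs, card_empty, mul_zero, Nat.cast_zero]
    split_ifs <;> positivity
  have hsol : ∀ u ∈ s, _ := fun u hu => (mem_filter.mp hu).2
  rw [if_pos (gcd_dvd_sub_of_intCast_eq (by rw [Int.cast_natCast]; exact (hsol u hu).1)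
    (by rw [Int.cast_natCast]; exact (hsol u hu).2))]
  have hcount := mul_mul_card_le_of_forall_cast_eq hn1 (Nat.pos_of_dvd_of_pos hd hq)
    (Nat.pos_of_dvd_of_pos hd' hq) ((hM2.mul_right hM2).coprime_dvd_right (Nat.mul_dvd_mul hd hd'))
    ((filter_subset _ _).trans hU) hsol
  have hbulk : n1 * (q * r / n1) ≤ q * r := Nat.mul_div_le _ _
  have hlcm : Nat.lcm d d' ≤ q * r :=
    (Nat.le_of_dvd hq (Nat.lcm_dvd hd hd')).trans (Nat.le_mul_of_pos_right _ hr)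
  have : d * d' * #s ≤ 2 * (q * r) * Nat.gcd d d' :=
    hcount.trans (by rw [mul_comm, two_mul]; gcongr)
  exact_mod_cast this

lemma norm_frakBWeight_le (M2 n1 : ℕ) (m : ℤ) (q u : ℕ) :
    ‖frakBWeight M2 n1 m q u‖ ≤
      ∑ d ∈ q.divisors, if (m : ZMod d) = ((M2 ^ 2 * n1 * u : ℕ) : ZMod d) then (d : ℝ) else 0 := by
  refine (norm_sum_le _ _).trans (sum_le_sum fun d _ => ?_)
  have hμ : |((ArithmeticFunction.moebius (q / d) : ℤ) : ℝ)| ≤ 1 := by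
    exact_mod_cast ArithmeticFunction.abs_moebius_le_one
  split_ifs
  · simpa using mul_le_of_le_one_right (Nat.cast_nonneg d) hμ
  · simp

lemma norm_sum_frakBWeight_mul_conj_le {M2 n1 q r : ℕ} (m m' : ℤ) (hn1 : 0 < n1) (hq : 0 < q)
    (hr : 0 < r) (hM2 : Nat.Coprime M2 q) {U : Finset ℕ} (hU : U ⊆ range (q * r / n1)) :
    ‖∑ u ∈ U, frakBWeight M2 n1 m q u * starRingEnd ℂ (frakBWeight M2 n1 m' q u)‖ ≤
      2 * ((q : ℝ) * r) * ∑ d ∈ q.divisors,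
        ∑ d' ∈ q.divisors.filter (fun d' => (Nat.gcd d d' : ℤ) ∣ m - m'), (Nat.gcd d d' : ℝ) := by
  calc _ ≤ ∑ u ∈ U,
        (∑ d ∈ q.divisors, if (m : ZMod d) = ((M2 ^ 2 * n1 * u : ℕ) : ZMod d) then (d : ℝ) else 0) *
        ∑ d' ∈ q.divisors,
          if (m' : ZMod d') = ((M2 ^ 2 * n1 * u : ℕ) : ZMod d') then (d' : ℝ) else 0 := by
        refine (norm_sum_le _ _).trans (sum_le_sum fun u _ => ?_)
        rw [norm_mul, Complex.norm_conj]
        exact mul_le_mul (norm_frakBWeight_le ..) (norm_frakBWeight_le ..) (norm_nonneg _)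
          (sum_nonneg fun _ _ => by positivity)
    _ = ∑ d ∈ q.divisors, ∑ d' ∈ q.divisors,
        ((d * d' * #{u ∈ U | (m : ZMod d) = ((M2 ^ 2 * n1 * u : ℕ) : ZMod d) ∧
          (m' : ZMod d') = ((M2 ^ 2 * n1 * u : ℕ) : ZMod d')} : ℕ) : ℝ) := by
        simp_rw [sum_mul_sum, ite_zero_mul_ite_zero]
        rw [sum_comm]
        refine sum_congr rfl fun d _ => ?_
        rw [sum_comm]
        refine sum_congr rfl fun d' _ => ?_
        rw [← sum_filter, sum_const, nsmul_eq_mul]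
        push_cast
        ring
    _ ≤ ∑ d ∈ q.divisors, ∑ d' ∈ q.divisors,
        if (Nat.gcd d d' : ℤ) ∣ m - m' then 2 * ((q : ℝ) * r) * Nat.gcd d d' else 0 :=
        sum_le_sum fun d hd => sum_le_sum fun d' hd' =>
          mul_mul_card_solutions_le hn1 hq hr hM2 (Nat.dvd_of_mem_divisors hd)
            (Nat.dvd_of_mem_divisors hd') hU
    _ = _ := by simp_rw [← sum_filter, mul_sum]

lemma injOn_inv_natCast_mul {N M1 : ℕ} (hM1 : Nat.Coprime M1 N) :
    Set.InjOn (fun u : ℕ => ((M1 : ZMod N) * u)⁻¹) ({u ∈ range N | Nat.Coprime u N} : Finset ℕ) := by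
  intro u hu u' hu' h
  simp only [coe_filter, mem_range, Set.mem_ofPred_eq] at hu hu'
  have hunit : ∀ v : ℕ, Nat.Coprime v N → IsUnit ((M1 : ZMod N) * v) := fun v hv => by
    rw [← Nat.cast_mul, ZMod.isUnit_iff_coprime]
    exact hM1.mul_left hv
  have hcast : (u : ZMod N) = u' := ((ZMod.isUnit_iff_coprime M1 N).mpr hM1).mul_left_cancel
    (ZMod.inv_injOn_isUnit (hunit u hu.2) (hunit u' hu'.2) h)
  rwa [ZMod.natCast_eq_natCast_iff', Nat.mod_eq_of_lt hu.1, Nat.mod_eq_of_lt hu'.1] at hcast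

lemma sum_range_frakB_mul_conj {r M1 M2 n1 q : ℕ} [NeZero (q * r / n1)] (k : ℕ) {ε : ℤ}
    (hε : IsUnit (ε : ZMod (q * r / n1))) (hM1 : Nat.Coprime M1 (q * r / n1)) (m m' : ℤ) :
    ∑ v ∈ range (k * (q * r / n1)),
      frakB r M1 M2 n1 (ε * v) m q * starRingEnd ℂ (frakB r M1 M2 n1 (ε * v) m' q)
      = (k * (q * r / n1 : ℕ) : ℂ) *
          ∑ u ∈ {u ∈ range (q * r / n1) | Nat.Coprime u (q * r / n1)},
            frakBWeight M2 n1 m q u * starRingEnd ℂ (frakBWeight M2 n1 m' q u) := by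
  simp_rw [frakB_eq_sum_frakBWeight]
  exact sum_range_mul_sum_eZMod_mul_conj k hε (injOn_inv_natCast_mul hM1) _ _

/-- bound for the zero-frequency character sum `𝒞2(0)`. -/
theorem zero_frequency_bound :
    ∃ C : ℝ, 0 < C ∧
      ∀ (M1 M2 q1 q2 r n1 : ℕ) (m m' ε δ : ℤ),
        M1.Prime → M2.Prime → M1 ≠ M2 →
        0 < q1 → 0 < q2 → 0 < r → 0 < n1 →
        Nat.Coprime q2 (q1 * M1 * M2) →
        Nat.Coprime (q1 * r) (M1 * M2) →
        n1 ∣ q1 * r → Nat.Coprime q2 (n1 * r) →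
        (ε = 1 ∨ ε = -1) → (δ = 1 ∨ δ = -1) →
        ‖((n1 : ℂ) / ((q2 : ℂ) ^ 2 * q1 * r)) *
            ∑ v ∈ Finset.range (q2 ^ 2 * q1 * r / n1),
              frakB r M1 M2 n1 (ε * v) (δ * m) (q1 * q2) *
                (starRingEnd ℂ) (frakB r M1 M2 n1 (ε * v) (δ * m') (q1 * q2))‖
          ≤ C * ((q1 : ℝ) * q2 * r) *
              ∑ d ∈ (q1 * q2).divisors,
                ∑ d' ∈ ((q1 * q2).divisors).filter
                    (fun d' => ((Nat.gcd d d' : ℤ)) ∣ (m - m')),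
                  (Nat.gcd d d' : ℝ) := by
  refine ⟨2, two_pos, ?_⟩
  intro M1 M2 q1 q2 r n1 m m' ε δ _ _ _ hq1 hq2 hr hn1 hq2M hq1rM hn1dvd _ hε hδ
  have hdvd : n1 ∣ q1 * q2 * r := mul_right_comm q1 r q2 ▸ hn1dvd.mul_right q2
  have hnN : n1 * (q1 * q2 * r / n1) = q1 * q2 * r := Nat.mul_div_cancel' hdvd
  have : NeZero (q1 * q2 * r / n1) := ⟨by rintro hN; simp [hN] at hnN; omega⟩
  have hlen : q2 ^ 2 * q1 * r / n1 = q2 * (q1 * q2 * r / n1) := by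
    rw [show q2 ^ 2 * q1 * r = q2 * (q1 * q2 * r) by ring, Nat.mul_div_assoc _ hdvd]
  obtain ⟨⟨-, hq2M1⟩, hq2M2⟩ := by simpa only [Nat.coprime_mul_iff_right] using hq2M
  obtain ⟨⟨hq1M1, hrM1⟩, hq1M2, -⟩ := by
    simpa only [Nat.coprime_mul_iff_left, Nat.coprime_mul_iff_right] using hq1rM
  have hM1 : Nat.Coprime M1 (q1 * q2 * r / n1) := Nat.Coprime.coprime_dvd_right
    (Nat.div_dvd_of_dvd hdvd) ((hq1M1.symm.mul_right hq2M1.symm).mul_right hrM1.symm)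
  have hprefactor : (n1 : ℂ) / ((q2 : ℂ) ^ 2 * q1 * r) * (q2 * (q1 * q2 * r / n1 : ℕ)) = 1 := by
    have hnN' : (n1 : ℂ) * (q1 * q2 * r / n1 : ℕ) = q1 * q2 * r := by exact_mod_cast hnN
    rw [div_mul_eq_mul_div, div_eq_one_iff_eq (by simp [hq1.ne', hq2.ne', hr.ne'])]
    linear_combination (q2 : ℂ) * hnN'
  rw [hlen, sum_range_frakB_mul_conj q2 (by rcases hε with rfl | rfl <;> simp) hM1,
    ← mul_assoc, hprefactor, one_mul]
  have hδdvd : ∀ g : ℤ, g ∣ δ * m - δ * m' ↔ g ∣ m - m' := fun g => by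
    rw [← mul_sub]; exact (Int.isUnit_iff.mpr hδ).dvd_mul_left
  calc _ ≤ _ := norm_sum_frakBWeight_mul_conj_le (δ * m) (δ * m') hn1 (by positivity) hr
        (hq1M2.symm.mul_right hq2M2.symm) (filter_subset _ _)
    _ = _ := by simp_rw [hδdvd]; push_cast; ring
end

section
/- There is an absolute constant C > 0 with the following property. Let N ≥ 1 and R ≥ 1 be real numbers, let ε ∈ (0, 1], and let K ≥ 0. Let a : ℕ × ℕ → ℂ, b : ℕ → ℂ, and c : ℕ × ℕ → ℂ be functions such that |c(n, r)| ≤ 1 for all n, r ≥ 1 and c(n, r) = 0 unless N ≤ n·r² ≤ 2N, and such that for every real x ≥ 1 one has Σ_{n, r ≥ 1, n·r² ≤ x} |a(n, r)|² ≤ K·x^{1+ε} and Σ_{1 ≤ n ≤ x} |b(n)|² ≤ K·x^{1+ε}. Then Σ_{r ≥ R} |Σ_{n ≥ 1} a(n, r)·b(n)·c(n, r)| ≤ C·K·N^{1+ε}·R^{-1/2}. -/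
/-!
Since `c (·, r)` is supported on the shell `N ≤ n r² ≤ 2N` and bounded by `1`, the `r`-th inner sum
is at most `∑ |a(n,r)| |b(n)|` over the shell. Split each product by the weighted AM–GM inequality
`xy ≤ (t x² + y² / t) / 2` with `t = R^{-1/2}`. The `a`-terms of all shells together lie in
`{n r² ≤ 2N}`, so they contribute `K (2N)^{1+ε}`; the `b`-terms of the `r`-th shell have
`n ≤ 2N / r²`, so they contribute `K (2N)^{1+ε} / r²`, and `∑_{r ≥ R} r⁻² ≤ 2 / R`.
The choice of `t` balances the two contributions at `R^{-1/2}`.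
-/

open Finset

theorem sum_inv_sq_le_two_div (s : Finset ℕ) {R : ℝ} (hR : 0 < R) (hs : ∀ r ∈ s, R ≤ r) :
    ∑ r ∈ s, ((r : ℝ) ^ 2)⁻¹ ≤ 2 / R := by
  have hceil : 1 ≤ ⌈R⌉₊ := Nat.one_le_ceil_iff.mpr hR
  have hsub : s ⊆ Ioo (⌈R⌉₊ - 1) (s.sup id + 1) := fun r hr => by
    have := Nat.ceil_le.mpr (hs r hr)
    have := le_sup (f := id) hr
    simp only [mem_Ioo, id] at *
    omega
  calc ∑ r ∈ s, ((r : ℝ) ^ 2)⁻¹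
      ≤ ∑ r ∈ Ioo (⌈R⌉₊ - 1) (s.sup id + 1), ((r : ℝ) ^ 2)⁻¹ :=
        sum_le_sum_of_subset_of_nonneg hsub fun _ _ _ => by positivity
    _ ≤ 2 / ((⌈R⌉₊ - 1 : ℕ) + 1 : ℝ) := sum_Ioo_inv_sq_le _ _
    _ = 2 / ⌈R⌉₊ := by rw [← Nat.cast_add_one, Nat.sub_add_cancel hceil]
    _ ≤ 2 / R := div_le_div_of_nonneg_left zero_le_two hR (Nat.le_ceil R)

theorem sum_Icc_floor_div_le {f : ℕ → ℝ} {K ε : ℝ} (hK : 0 ≤ K) (hε : 0 ≤ ε)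
    (hf : ∀ x : ℝ, 1 ≤ x → ∑ n ∈ Icc 1 ⌊x⌋₊, f n ≤ K * x ^ (1 + ε))
    {Y q : ℝ} (hY : 0 ≤ Y) (hq : 1 ≤ q) :
    ∑ n ∈ Icc 1 ⌊Y / q⌋₊, f n ≤ K * Y ^ (1 + ε) / q := by
  have hq0 : 0 < q := one_pos.trans_le hq
  rcases lt_or_ge (Y / q) 1 with hlt | hge
  · rw [Nat.floor_eq_zero.mpr hlt, Icc_eq_empty (by omega), sum_empty]
    positivity
  · calc ∑ n ∈ Icc 1 ⌊Y / q⌋₊, f n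
        ≤ K * (Y / q) ^ (1 + ε) := hf _ hge
      _ = K * Y ^ (1 + ε) / q ^ (1 + ε) := by
        rw [Real.div_rpow hY hq0.le, mul_div_assoc]
      _ ≤ K * Y ^ (1 + ε) / q := by
        gcongr
        exact Real.self_le_rpow_of_one_le hq (by linarith)

theorem norm_sum_mul_le_sum_filter {ι 𝕜 : Type*} [SeminormedRing 𝕜] (s : Finset ι)
    (p : ι → Prop) [DecidablePred p] (f w : ι → 𝕜) (hw : ∀ i ∈ s, ‖w i‖ ≤ 1)
    (hw0 : ∀ i ∈ s, ¬ p i → w i = 0) :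
    ‖∑ i ∈ s, f i * w i‖ ≤ ∑ i ∈ s.filter p, ‖f i‖ := by
  rw [← sum_filter_of_ne fun i hi hne => by_contra fun hp => hne (by rw [hw0 i hi hp, mul_zero])]
  refine (norm_sum_le _ _).trans (sum_le_sum fun i hi => ?_)
  calc ‖f i * w i‖ ≤ ‖f i‖ * ‖w i‖ := norm_mul_le _ _
    _ ≤ ‖f i‖ := mul_le_of_le_one_right (norm_nonneg _) (hw i (mem_filter.mp hi).1)

theorem sum_mul_le_weighted_sum_sq {ι : Type*} (s : Finset ι) (x y : ι → ℝ) {t : ℝ} (ht : 0 < t) :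
    ∑ i ∈ s, x i * y i ≤ t / 2 * ∑ i ∈ s, x i ^ 2 + t⁻¹ / 2 * ∑ i ∈ s, y i ^ 2 := by
  rw [mul_sum, mul_sum, ← sum_add_distrib]
  refine sum_le_sum fun i _ => ?_
  have := mul_inv_cancel₀ ht.ne'
  nlinarith [sq_nonneg (t * x i - y i), inv_pos.mpr ht]

theorem rpow_neg_half_inv_div {R : ℝ} (hR : 0 < R) :
    (R ^ (-(1 / 2) : ℝ))⁻¹ / R = R ^ (-(1 / 2) : ℝ) := by
  rw [← Real.rpow_neg hR.le, div_eq_iff hR.ne', ← Real.rpow_add_one hR.ne']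
  norm_num

theorem two_mul_rpow_le {N s : ℝ} (hN : 0 ≤ N) (hs : s ≤ 2) : (2 * N) ^ s ≤ 4 * N ^ s := by
  rw [Real.mul_rpow zero_le_two hN]
  gcongr
  calc (2 : ℝ) ^ s ≤ 2 ^ (2 : ℝ) := Real.rpow_le_rpow_of_exponent_le one_le_two hs
    _ = 4 := by norm_num

noncomputable def shell (N : ℝ) (r : ℕ) : Finset ℕ :=
  (Icc 1 ⌊2 * N⌋₊).filter fun n => N ≤ (n : ℝ) * (r : ℝ) ^ 2 ∧ (n : ℝ) * (r : ℝ) ^ 2 ≤ 2 * N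

theorem sum_sum_shell_le {f : ℕ × ℕ → ℝ} {N K ε : ℝ} (hf : ∀ p, 0 ≤ f p) (hN : 1 ≤ N)
    (hK : ∀ x : ℝ, 1 ≤ x →
      ∑ p ∈ (Icc 1 ⌊x⌋₊ ×ˢ Icc 1 ⌊x⌋₊).filter (fun p => p.1 * p.2 ^ 2 ≤ ⌊x⌋₊), f p
        ≤ K * x ^ (1 + ε))
    {s : Finset ℕ} (hs : s ⊆ Icc 1 ⌊2 * N⌋₊) :
    ∑ r ∈ s, ∑ n ∈ shell N r, f (n, r) ≤ K * (2 * N) ^ (1 + ε) := by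
  set M := ⌊2 * N⌋₊
  have hshell : ∀ r, shell N r ⊆ (Icc 1 M).filter fun n => n * r ^ 2 ≤ M := fun r n hn => by
    simp only [shell, mem_filter] at hn ⊢
    exact ⟨hn.1, Nat.le_floor (by exact_mod_cast hn.2.2)⟩
  calc ∑ r ∈ s, ∑ n ∈ shell N r, f (n, r)
      ≤ ∑ r ∈ s, ∑ n ∈ (Icc 1 M).filter (fun n => n * r ^ 2 ≤ M), f (n, r) :=
        sum_le_sum fun r _ => sum_le_sum_of_subset_of_nonneg (hshell r) fun _ _ _ => hf _
    _ ≤ ∑ r ∈ Icc 1 M, ∑ n ∈ (Icc 1 M).filter (fun n => n * r ^ 2 ≤ M), f (n, r) :=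
        sum_le_sum_of_subset_of_nonneg hs fun _ _ _ => sum_nonneg fun _ _ => hf _
    _ = ∑ p ∈ (Icc 1 M ×ˢ Icc 1 M).filter (fun p => p.1 * p.2 ^ 2 ≤ M), f p := by
        rw [sum_filter, sum_product, sum_comm]
        simp only [sum_filter]
    _ ≤ K * (2 * N) ^ (1 + ε) := hK _ (by linarith)

theorem sum_sum_shell_le_div {f : ℕ → ℝ} {N R K ε : ℝ} (hf : ∀ n, 0 ≤ f n) (hN : 0 ≤ N)
    (hR : 0 < R) (hK : 0 ≤ K) (hε : 0 ≤ ε)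
    (hKf : ∀ x : ℝ, 1 ≤ x → ∑ n ∈ Icc 1 ⌊x⌋₊, f n ≤ K * x ^ (1 + ε))
    {s : Finset ℕ} (hs : ∀ r ∈ s, R ≤ r) :
    ∑ r ∈ s, ∑ n ∈ shell N r, f n ≤ 2 * K * (2 * N) ^ (1 + ε) / R := by
  have hr : ∀ r ∈ s, ∑ n ∈ shell N r, f n ≤ K * (2 * N) ^ (1 + ε) * ((r : ℝ) ^ 2)⁻¹ := by
    intro r hrs
    have hr1 : (1 : ℝ) ≤ (r : ℝ) ^ 2 :=
      one_le_pow₀ (Nat.one_le_cast.mpr (Nat.cast_pos.mp (hR.trans_le (hs r hrs))))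
    have hsub : shell N r ⊆ Icc 1 ⌊2 * N / (r : ℝ) ^ 2⌋₊ := fun n hn => by
      simp only [shell, mem_filter, mem_Icc] at hn ⊢
      exact ⟨hn.1.1, Nat.le_floor ((le_div_iff₀ (by linarith)).mpr hn.2.2)⟩
    calc ∑ n ∈ shell N r, f n ≤ ∑ n ∈ Icc 1 ⌊2 * N / (r : ℝ) ^ 2⌋₊, f n :=
          sum_le_sum_of_subset_of_nonneg hsub fun _ _ _ => hf _
      _ ≤ K * (2 * N) ^ (1 + ε) / (r : ℝ) ^ 2 := sum_Icc_floor_div_le hK hε hKf (by linarith) hr1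
      _ = _ := div_eq_mul_inv _ _
  calc ∑ r ∈ s, ∑ n ∈ shell N r, f n
      ≤ ∑ r ∈ s, K * (2 * N) ^ (1 + ε) * ((r : ℝ) ^ 2)⁻¹ := sum_le_sum hr
    _ = K * (2 * N) ^ (1 + ε) * ∑ r ∈ s, ((r : ℝ) ^ 2)⁻¹ := (mul_sum _ _ _).symm
    _ ≤ K * (2 * N) ^ (1 + ε) * (2 / R) := by
        gcongr
        exact sum_inv_sq_le_two_div s hR hs
    _ = 2 * K * (2 * N) ^ (1 + ε) / R := by ring

/-- the tail `r ≥ R` of the smoothed sum is `O(K·N^{1+ε}·R^{-1/2})`. -/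
theorem large_r_tail_bound :
    ∃ C : ℝ, 0 < C ∧
      ∀ (N R ε K : ℝ) (a : ℕ × ℕ → ℂ) (b : ℕ → ℂ) (c : ℕ × ℕ → ℂ),
        1 ≤ N → 1 ≤ R → 0 < ε → ε ≤ 1 → 0 ≤ K →
        (∀ n r : ℕ, 1 ≤ n → 1 ≤ r → ‖c (n, r)‖ ≤ 1) →
        (∀ n r : ℕ, 1 ≤ n → 1 ≤ r →
          ¬ (N ≤ (n : ℝ) * (r : ℝ) ^ 2 ∧ (n : ℝ) * (r : ℝ) ^ 2 ≤ 2 * N) → c (n, r) = 0) →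
        (∀ x : ℝ, 1 ≤ x →
          ∑ p ∈ (Finset.Icc 1 ⌊x⌋₊ ×ˢ Finset.Icc 1 ⌊x⌋₊).filter
              (fun p => p.1 * p.2 ^ 2 ≤ ⌊x⌋₊),
            ‖a p‖ ^ 2 ≤ K * x ^ (1 + ε)) →
        (∀ x : ℝ, 1 ≤ x →
          ∑ n ∈ Finset.Icc 1 ⌊x⌋₊, ‖b n‖ ^ 2 ≤ K * x ^ (1 + ε)) →
        ∑ r ∈ (Finset.Icc 1 ⌊2 * N⌋₊).filter (fun r => ⌈R⌉₊ ≤ r),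
          ‖∑ n ∈ Finset.Icc 1 ⌊2 * N⌋₊, a (n, r) * b n * c (n, r)‖
        ≤ C * K * N ^ (1 + ε) * R ^ (-(1 / 2) : ℝ) := by
  refine ⟨6, by norm_num, fun N R ε K a b c hN hR hε hε1 hK hc1 hc0 ha hb => ?_⟩
  have hR0 : 0 < R := one_pos.trans_le hR
  set F := (Icc 1 ⌊2 * N⌋₊).filter fun r => ⌈R⌉₊ ≤ r
  set t := R ^ (-(1 / 2) : ℝ)
  have ht : 0 < t := Real.rpow_pos_of_pos hR0 _
  have hinner : ∀ r ∈ F, ‖∑ n ∈ Icc 1 ⌊2 * N⌋₊, a (n, r) * b n * c (n, r)‖ ≤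
      ∑ n ∈ shell N r, ‖a (n, r)‖ * ‖b n‖ := fun r hr => by
    have hr1 : 1 ≤ r := (mem_Icc.mp (mem_filter.mp hr).1).1
    simpa only [norm_mul, shell] using norm_sum_mul_le_sum_filter _ _ (fun n => a (n, r) * b n)
      (fun n => c (n, r)) (fun n hn => hc1 n r (mem_Icc.mp hn).1 hr1)
      (fun n hn => hc0 n r (mem_Icc.mp hn).1 hr1)
  have hA := sum_sum_shell_le (s := F) (fun p => sq_nonneg ‖a p‖) hN ha (filter_subset _ _)
  have hB := sum_sum_shell_le_div (N := N) (s := F) (fun n => sq_nonneg ‖b n‖) (by linarith)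
    hR0 hK hε.le hb fun r hr => (Nat.le_ceil R).trans (by exact_mod_cast (mem_filter.mp hr).2)
  calc ∑ r ∈ F, ‖∑ n ∈ Icc 1 ⌊2 * N⌋₊, a (n, r) * b n * c (n, r)‖
      ≤ ∑ r ∈ F, (t / 2 * ∑ n ∈ shell N r, ‖a (n, r)‖ ^ 2 +
          t⁻¹ / 2 * ∑ n ∈ shell N r, ‖b n‖ ^ 2) :=
        sum_le_sum fun r hr => (hinner r hr).trans (sum_mul_le_weighted_sum_sq _ _ _ ht)
    _ = t / 2 * ∑ r ∈ F, ∑ n ∈ shell N r, ‖a (n, r)‖ ^ 2 +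
          t⁻¹ / 2 * ∑ r ∈ F, ∑ n ∈ shell N r, ‖b n‖ ^ 2 := by
        rw [sum_add_distrib, mul_sum, mul_sum]
    _ ≤ t / 2 * (K * (2 * N) ^ (1 + ε)) + t⁻¹ / 2 * (2 * K * (2 * N) ^ (1 + ε) / R) := by
        gcongr
    _ = 3 / 2 * K * (2 * N) ^ (1 + ε) * t := by
        linear_combination (K * (2 * N) ^ (1 + ε)) * rpow_neg_half_inv_div hR0
    _ ≤ 3 / 2 * K * (4 * N ^ (1 + ε)) * t := by
        gcongr
        exact two_mul_rpow_le (by linarith) (by linarith)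
    _ = 6 * K * N ^ (1 + ε) * t := by ring
end
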